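/- arXiv:1410.8781 — 5 statements merged into one kernel-verified Lean document; each statement's English description precedes it below -/
import Mathlib

section
/- If a map α : ℝ² → ℝ² is a similarity of ratio r ≠ 1 that sends every line to a parallel line (a dilatation), then there exist a point C and a scalar s ≠ 0 with α(P) = C + s • (P − C) for all P; i.e., α is a dilation. -/
theorem dilatation_similarity_is_dilation
    (α : EuclideanSpace ℝ (Fin 2) → EuclideanSpace ℝ (Fin 2)) (r : ℝ) (hr : 0 < r) (hr1 : r ≠ 1)
    (hα : ∀ P Q, dist (α P) (α Q) = r * dist P Q)
    (hdil : ∀ A B : EuclideanSpace ℝ (Fin 2), A ≠ B →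
      (affineSpan ℝ ({α A, α B} : Set (EuclideanSpace ℝ (Fin 2)))).direction
        = (affineSpan ℝ ({A, B} : Set (EuclideanSpace ℝ (Fin 2)))).direction) :
    ∃ (C : EuclideanSpace ℝ (Fin 2)) (s : ℝ), s ≠ 0 ∧ ∀ P, α P = C + s • (P - C) := by
  -- Step 1: for each pair A ≠ B, α A - α B = c • (A - B) with c = r or c = -r.
  have key : ∀ A B : EuclideanSpace ℝ (Fin 2), A ≠ B →
      ∃ c : ℝ, (c = r ∨ c = -r) ∧ α A - α B = c • (A - B) := by
    intro A B hAB
    have hd := hdil A B hAB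
    rw [direction_affineSpan, direction_affineSpan, vectorSpan_pair, vectorSpan_pair] at hd
    have hmem : α A -ᵥ α B ∈ (ℝ ∙ (A -ᵥ B)) := by
      rw [← hd]; exact Submodule.mem_span_singleton_self _
    obtain ⟨c, hc⟩ := Submodule.mem_span_singleton.mp hmem
    have hc' : α A - α B = c • (A - B) := by
      simpa [vsub_eq_sub] using hc.symm
    refine ⟨c, ?_, hc'⟩
    have hABne : A - B ≠ 0 := sub_ne_zero.mpr hAB
    have hnorm : ‖α A - α B‖ = r * ‖A - B‖ := by
      rw [← dist_eq_norm, ← dist_eq_norm]; exact hα A B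
    rw [hc', norm_smul] at hnorm
    have habs : |c| = r :=
      mul_right_cancel₀ (norm_ne_zero_iff.mpr hABne) hnorm
    exact (abs_eq hr.le).mp habs
  set P₀ : EuclideanSpace ℝ (Fin 2) := EuclideanSpace.single 0 1 with hP₀def
  have hP₀ : P₀ ≠ 0 := by
    intro h
    have h1 : ‖P₀‖ = 1 := by simp [hP₀def]
    rw [h] at h1
    simp at h1
  obtain ⟨s, hs_or, hs⟩ := key P₀ 0 hP₀
  rw [sub_zero] at hs
  have hsne : s ≠ 0 := by
    rcases hs_or with h | h <;> simp [h, hr.ne']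
  have hs1 : s ≠ 1 := by
    rcases hs_or with h | h
    · rw [h]; exact hr1
    · rw [h]; intro hcon; linarith
  have h2r : (2 : ℝ) * r ≠ 0 := by positivity
  -- Step 2: the scalar for any P equals s.
  have main : ∀ P : EuclideanSpace ℝ (Fin 2), α P - α 0 = s • P := by
    intro P
    by_cases hP : P = 0
    · simp [hP]
    obtain ⟨c, hc_or, hc⟩ := key P 0 hP
    rw [sub_zero] at hc
    by_cases hPP : P = P₀
    · subst hPP
      have hcs : c = s := smul_left_injective ℝ hP₀ (hc.symm.trans hs)
      rw [hc, hcs]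
    · obtain ⟨c', hc'_or, hc'⟩ := key P P₀ hPP
      have heq : c' • (P - P₀) = c • P - s • P₀ := by
        rw [← hc', ← hc, ← hs]; abel
      have hcs : c = s := by
        rcases hc_or with h1 | h1 <;> rcases hs_or with h2 | h2 <;> rw [h1, h2]
        · exfalso
          rw [h1, h2] at heq
          rcases hc'_or with h3 | h3 <;> rw [h3] at heq
          · have h4 : (2 * r) • P₀ = 0 := by
              linear_combination (norm := module) -heq
            exact hP₀ ((smul_eq_zero.mp h4).resolve_left h2r)
          · have h4 : (2 * r) • P = 0 := by
              linear_combination (norm := module) -heq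
            exact hP ((smul_eq_zero.mp h4).resolve_left h2r)
        · exfalso
          rw [h1, h2] at heq
          rcases hc'_or with h3 | h3 <;> rw [h3] at heq
          · have h4 : (2 * r) • P = 0 := by
              linear_combination (norm := module) heq
            exact hP ((smul_eq_zero.mp h4).resolve_left h2r)
          · have h4 : (2 * r) • P₀ = 0 := by
              linear_combination (norm := module) heq
            exact hP₀ ((smul_eq_zero.mp h4).resolve_left h2r)
      rw [hc, hcs]
  -- Step 3: assemble the dilation with center C = (1-s)⁻¹ • α 0.
  refine ⟨(1 - s)⁻¹ • α 0, s, hsne, fun P => ?_⟩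
  have h1s : (1 : ℝ) - s ≠ 0 := sub_ne_zero.mpr (Ne.symm hs1)
  have hco : (1 - s)⁻¹ - s * (1 - s)⁻¹ = 1 := by field_simp
  have hP : α P = α 0 + s • P := by
    have := main P
    rw [← this]; abel
  rw [hP]
  linear_combination (norm := module) (-hco) • (α 0)
end

section
/- Collinearity lemma for the fixed-point construction: Let α be a similarity of ratio r ≠ 1 with fixed point C. Let l and m be distinct parallel lines not passing through C, and suppose l meets α(l) in a unique point D and m meets α(m) in a unique point E. Then C, D, and E are collinear. -/
open AffineSubspace

theorem collinearity_lemma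
    (α : EuclideanSpace ℝ (Fin 2) → EuclideanSpace ℝ (Fin 2)) (r : ℝ) (hr : 0 < r) (hr1 : r ≠ 1)
    (hα : ∀ P Q, dist (α P) (α Q) = r * dist P Q)
    (C : EuclideanSpace ℝ (Fin 2)) (hC : α C = C)
    (l m : AffineSubspace ℝ (EuclideanSpace ℝ (Fin 2)))
    (hl : Module.finrank ℝ l.direction = 1) (hm : Module.finrank ℝ m.direction = 1)
    (hlm : l ≠ m) (hpar : l.direction = m.direction)
    (hCl : C ∉ l) (hCm : C ∉ m)
    (D E : EuclideanSpace ℝ (Fin 2))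
    (hD : (l : Set (EuclideanSpace ℝ (Fin 2))) ∩ (α '' l) = {D})
    (hE : (m : Set (EuclideanSpace ℝ (Fin 2))) ∩ (α '' m) = {E}) :
    Collinear ℝ ({C, D, E} : Set (EuclideanSpace ℝ (Fin 2))) := by
  -- α is continuous (Lipschitz)
  have hcont : Continuous α := by
    refine (LipschitzWith.of_dist_le_mul (K := r.toNNReal) (fun x y => ?_)).continuous
    rw [hα]
    simp [Real.coe_toNNReal r hr.le]
  -- α is affine
  have hmid : ∀ x y, α (midpoint ℝ x y) = midpoint ℝ (α x) (α y) := by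
    intro x y
    apply eq_midpoint_of_dist_eq_half
    · rw [hα, hα]
      rw [dist_left_midpoint]
      simp only [Real.norm_ofNat]
      ring
    · rw [hα, hα]
      rw [dist_midpoint_right]
      simp only [Real.norm_ofNat]
      ring
  set f : EuclideanSpace ℝ (Fin 2) →ᵃ[ℝ] EuclideanSpace ℝ (Fin 2) :=
    AffineMap.ofMapMidpoint α hmid hcont with hf
  have hfα : ∀ x, f x = α x := fun x => rfl
  -- key affine computation
  have key : ∀ (k : ℝ) (P : EuclideanSpace ℝ (Fin 2)),
      α (k • (P -ᵥ C) +ᵥ C) = k • (α P -ᵥ C) +ᵥ C := by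
    intro k P
    have h1 : α (k • (P -ᵥ C) +ᵥ C) = f (k • (P -ᵥ C) +ᵥ C) := rfl
    rw [h1, f.map_vadd, LinearMap.map_smul]
    have h2 : f.linear (P -ᵥ C) = f P -ᵥ f C := (f.linearMap_vsub P C).symm ▸ rfl
    rw [h2, hfα, hfα, hC]
  -- pick points A ∈ l, B ∈ m
  have hlne : (l : Set (EuclideanSpace ℝ (Fin 2))).Nonempty := by
    rcases l.eq_bot_or_nonempty with h | h
    · exfalso; rw [h, AffineSubspace.direction_bot] at hl; simp at hl
    · exact h
  have hmne : (m : Set (EuclideanSpace ℝ (Fin 2))).Nonempty := by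
    rcases m.eq_bot_or_nonempty with h | h
    · exfalso; rw [h, AffineSubspace.direction_bot] at hm; simp at hm
    · exact h
  obtain ⟨A, hA⟩ := hlne
  obtain ⟨B, hB⟩ := hmne
  set W := l.direction with hW
  have hAC : A -ᵥ C ∉ W := by
    intro h
    apply hCl
    rw [← vsub_vadd C A]
    apply AffineSubspace.vadd_mem_of_mem_direction _ hA
    rw [← neg_vsub_eq_vsub_rev]
    exact Submodule.neg_mem _ h
  -- span (A - C) ⊔ W = ⊤
  have htop : (ℝ ∙ (A -ᵥ C)) ⊔ W = ⊤ := by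
    have hlt : W < (ℝ ∙ (A -ᵥ C)) ⊔ W := by
      refine lt_of_le_of_ne le_sup_right (fun h => hAC ?_)
      rw [h]
      exact Submodule.mem_sup_left (Submodule.mem_span_singleton_self _)
    have h2 : 2 ≤ Module.finrank ℝ ((ℝ ∙ (A -ᵥ C)) ⊔ W : Submodule ℝ _) := by
      have := Submodule.finrank_lt_finrank_of_lt hlt
      omega
    apply Submodule.eq_top_of_finrank_eq
    have hle := Submodule.finrank_le ((ℝ ∙ (A -ᵥ C)) ⊔ W)
    have : Module.finrank ℝ (EuclideanSpace ℝ (Fin 2)) = 2 := by simp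
    omega
  -- decompose B - C
  have hBmem : B -ᵥ C ∈ (ℝ ∙ (A -ᵥ C)) ⊔ W := htop ▸ Submodule.mem_top
  rw [Submodule.mem_sup] at hBmem
  obtain ⟨y, hy, w, hw, hyw⟩ := hBmem
  rw [Submodule.mem_span_singleton] at hy
  obtain ⟨k, rfl⟩ := hy
  -- the homothety x ↦ k•(x - C) + C maps l into m
  have hσ : ∀ X ∈ l, k • (X -ᵥ C) +ᵥ C ∈ m := by
    intro X hX
    have hXA : X -ᵥ A ∈ W := AffineSubspace.vsub_mem_direction hX hA
    have : k • (X -ᵥ C) +ᵥ C = (k • (X -ᵥ A) - w) +ᵥ B := by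
      have h1 : (X : EuclideanSpace ℝ (Fin 2)) -ᵥ C = (X -ᵥ A) + (A -ᵥ C) :=
        (vsub_add_vsub_cancel X A C).symm
      have h2 : k • (A -ᵥ C) = (B -ᵥ C) - w := by rw [← hyw]; abel
      rw [h1, smul_add, h2]
      simp only [vsub_eq_sub, vadd_eq_add]
      abel
    rw [this]
    apply AffineSubspace.vadd_mem_of_mem_direction _ hB
    rw [← hpar]
    exact Submodule.sub_mem _ (Submodule.smul_mem _ _ hXA) hw
  -- D is in l ∩ α '' l
  have hDmem : D ∈ (l : Set (EuclideanSpace ℝ (Fin 2))) ∩ (α '' l) := by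
    rw [hD]; rfl
  obtain ⟨hDl, P, hPl, hPD⟩ := hDmem
  -- E' := k•(D-C)+C is in m ∩ α '' m, hence equals E
  have hE' : k • (D -ᵥ C) +ᵥ C ∈ (m : Set (EuclideanSpace ℝ (Fin 2))) ∩ (α '' m) := by
    constructor
    · exact hσ D hDl
    · refine ⟨k • (P -ᵥ C) +ᵥ C, hσ P hPl, ?_⟩
      rw [key k P, hPD]
  rw [hE] at hE'
  have hEeq : E = k • (D -ᵥ C) +ᵥ C := hE'.symm
  -- conclude collinearity
  have : Collinear ℝ ({C, D, E} : Set (EuclideanSpace ℝ (Fin 2))) := by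
    rw [collinear_iff_of_mem (Set.mem_insert C _)]
    refine ⟨D -ᵥ C, ?_⟩
    intro p hp
    rcases hp with rfl | rfl | rfl
    · exact ⟨0, by simp⟩
    · exact ⟨1, by simp⟩
    · exact ⟨k, by rw [hEeq]⟩
  exact this
end

section
/- Let α be a similarity of ratio r ≠ 1 that is not a dilatation (some line q satisfies α(q) not parallel to q). Then there exist non-collinear points P, Q, R such that α(P), α(Q), α(R) are non-collinear, line PQ is not parallel to line α(P)α(Q), and line QR is not parallel to line α(Q)α(R). -/
open Submodule

lemma indep_of_not_mem_span {E : Type*} [AddCommGroup E] [Module ℝ E]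
    {u w : E} (hu : u ≠ 0) (hw : w ∉ (ℝ ∙ u)) {x y : ℝ}
    (h : x • u + y • w = 0) : x = 0 ∧ y = 0 := by
  have hy : y = 0 := by
    by_contra hy
    apply hw
    rw [Submodule.mem_span_singleton]
    refine ⟨-x / y, ?_⟩
    have hyw : y • w = -(x • u) := by rw [add_comm] at h; exact eq_neg_of_add_eq_zero_left h
    have hw' : w = y⁻¹ • (y • w) := by
      rw [smul_smul, inv_mul_cancel₀ hy, one_smul]
    rw [hw', hyw, smul_neg, smul_smul, ← neg_smul]
    congr 1
    field_simp
  subst hy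
  rw [zero_smul, add_zero, smul_eq_zero] at h
  exact ⟨h.resolve_right hu, rfl⟩

lemma span_smul_ne_zero {E : Type*} [AddCommGroup E] [Module ℝ E]
    {b : ℝ} (hb : b ≠ 0) (u : E) : (ℝ ∙ (b • u)) = ℝ ∙ u :=
  span_singleton_smul_eq (IsUnit.mk0 b hb) u

lemma span_neg' {E : Type*} [AddCommGroup E] [Module ℝ E] (u : E) :
    (ℝ ∙ (-u)) = ℝ ∙ u := by
  rw [← neg_one_smul ℝ u]
  exact span_smul_ne_zero (by norm_num) u

lemma exists_v {E : Type*} [AddCommGroup E] [Module ℝ E]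
    (L : E →ₗ[ℝ] E) (hL : Function.Injective L)
    {u w₀ : E} (hu : u ≠ 0) (hw₀ : w₀ ∉ (ℝ ∙ u))
    (hLu : (ℝ ∙ L u) ≠ (ℝ ∙ u)) :
    ∃ v : E, v ∉ (ℝ ∙ u) ∧ (ℝ ∙ L v) ≠ (ℝ ∙ v) := by
  by_contra h
  push_neg at h
  have husp : u ∈ (ℝ ∙ u) := mem_span_singleton_self u
  have hw₁ : u + w₀ ∉ (ℝ ∙ u) := by
    intro hm
    exact hw₀ (by simpa using sub_mem hm husp)
  have hw₂ : u + w₀ + w₀ ∉ (ℝ ∙ u) := by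
    intro hm
    have h2 : w₀ + w₀ ∈ (ℝ ∙ u) := by simpa [add_assoc] using sub_mem hm husp
    apply hw₀
    have := smul_mem (ℝ ∙ u) (1/2 : ℝ) h2
    simpa [smul_add, ← two_smul ℝ w₀, smul_smul] using this
  have key : ∀ v : E, v ∉ (ℝ ∙ u) → ∃ a : ℝ, L v = a • v := by
    intro v hv
    have hsp := h v hv
    have : L v ∈ (ℝ ∙ v) := hsp ▸ mem_span_singleton_self (L v)
    obtain ⟨a, ha⟩ := mem_span_singleton.mp this
    exact ⟨a, ha.symm⟩
  obtain ⟨a, ha⟩ := key w₀ hw₀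
  obtain ⟨b, hb⟩ := key (u + w₀) hw₁
  obtain ⟨c, hc⟩ := key (u + w₀ + w₀) hw₂
  have hsum : L (u + w₀ + w₀) = L (u + w₀) + L w₀ := by rw [map_add]
  rw [hc, hb, ha] at hsum
  have e : (c - b) • u + (c + c - (b + a)) • w₀ = 0 := by
    have : c • (u + w₀ + w₀) - (b • (u + w₀) + a • w₀) = 0 := sub_eq_zero.mpr hsum
    rw [← this]; module
  obtain ⟨e1, e2⟩ := indep_of_not_mem_span hu hw₀ e
  have hcb : c = b := by linarith
  have hab : a = b := by linarith
  have hLub : L u = b • u := by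
    have : L u = L (u + w₀) - L w₀ := by rw [map_add]; abel
    rw [hb, ha, hab] at this
    rw [this]; module
  have hbne : b ≠ 0 := by
    intro h0
    rw [h0, zero_smul] at hLub
    exact hu (hL (by rw [hLub, map_zero]))
  exact hLu (by rw [hLub, span_smul_ne_zero hbne])

theorem exists_good_triangles
    (α : EuclideanSpace ℝ (Fin 2) → EuclideanSpace ℝ (Fin 2)) (r : ℝ) (hr : 0 < r) (hr1 : r ≠ 1)
    (hα : ∀ P Q, dist (α P) (α Q) = r * dist P Q)
    (hnotdil : ∃ A B : EuclideanSpace ℝ (Fin 2), A ≠ B ∧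
      (affineSpan ℝ ({α A, α B} : Set (EuclideanSpace ℝ (Fin 2)))).direction
        ≠ (affineSpan ℝ ({A, B} : Set (EuclideanSpace ℝ (Fin 2)))).direction) :
    ∃ P Q R : EuclideanSpace ℝ (Fin 2),
      ¬ Collinear ℝ ({P, Q, R} : Set (EuclideanSpace ℝ (Fin 2))) ∧
      ¬ Collinear ℝ ({α P, α Q, α R} : Set (EuclideanSpace ℝ (Fin 2))) ∧
      (affineSpan ℝ ({P, Q} : Set (EuclideanSpace ℝ (Fin 2)))).direction
        ≠ (affineSpan ℝ ({α P, α Q} : Set (EuclideanSpace ℝ (Fin 2)))).direction ∧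
      (affineSpan ℝ ({Q, R} : Set (EuclideanSpace ℝ (Fin 2)))).direction
        ≠ (affineSpan ℝ ({α Q, α R} : Set (EuclideanSpace ℝ (Fin 2)))).direction := by
  classical
  have hiso : Isometry (fun x => r⁻¹ • α x) := by
    apply Isometry.of_dist_eq
    intro x y
    rw [dist_smul₀, hα, Real.norm_eq_abs, abs_of_pos (inv_pos.mpr hr), ← mul_assoc,
      inv_mul_cancel₀ hr.ne', one_mul]
  set g := hiso.affineIsometryOfStrictConvexSpace with hg
  have hgval : ∀ x, α x = r • g x := by
    intro x
    have : g x = r⁻¹ • α x := rfl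
    rw [this, smul_smul, mul_inv_cancel₀ hr.ne', one_smul]
  set L : (EuclideanSpace ℝ (Fin 2)) →ₗ[ℝ] (EuclideanSpace ℝ (Fin 2)) := r • g.linearIsometry.toLinearMap with hLdef
  have hsub : ∀ x y : (EuclideanSpace ℝ (Fin 2)), α x - α y = L (x - y) := by
    intro x y
    have h1 : g.linearIsometry (x -ᵥ y) = g x -ᵥ g y := g.map_vsub x y
    rw [hgval, hgval]
    simp only [hLdef, LinearMap.smul_apply, LinearIsometry.coe_toLinearMap]
    rw [show (x : (EuclideanSpace ℝ (Fin 2))) - y = x -ᵥ y from rfl, h1]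
    rw [show (g x : (EuclideanSpace ℝ (Fin 2))) -ᵥ g y = g x - g y from rfl, smul_sub]
  have hLinj : Function.Injective L := by
    intro x y hxy
    have h0 : L (x - y) = 0 := by rw [map_sub, hxy, sub_self]
    simp only [hLdef, LinearMap.smul_apply, LinearIsometry.coe_toLinearMap,
      smul_eq_zero] at h0
    rcases h0 with h | h
    · exact absurd h hr.ne'
    · have : x - y = 0 := g.linearIsometry.injective (by rw [h, map_zero])
      exact sub_eq_zero.mp this
  have hdir : ∀ x y : (EuclideanSpace ℝ (Fin 2)), (affineSpan ℝ ({x, y} : Set (EuclideanSpace ℝ (Fin 2)))).direction = ℝ ∙ (x - y) := by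
    intro x y
    rw [direction_affineSpan, vectorSpan_pair, vsub_eq_sub]
  have hdirα : ∀ x y : (EuclideanSpace ℝ (Fin 2)), (affineSpan ℝ ({α x, α y} : Set (EuclideanSpace ℝ (Fin 2)))).direction = ℝ ∙ L (x - y) := by
    intro x y
    rw [direction_affineSpan, vectorSpan_pair, show (α x : (EuclideanSpace ℝ (Fin 2))) -ᵥ α y = α x - α y from rfl, hsub]
  obtain ⟨A, B, hAB, hABdir⟩ := hnotdil
  set u : (EuclideanSpace ℝ (Fin 2)) := A - B with hudef
  have hu : u ≠ 0 := sub_ne_zero.mpr hAB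
  have hLu : (ℝ ∙ L u) ≠ (ℝ ∙ u) := by
    rw [← hdirα, ← hdir]; exact hABdir
  have hspan_ne_top : (ℝ ∙ u) ≠ (⊤ : Submodule ℝ (EuclideanSpace ℝ (Fin 2))) := by
    intro h
    have h1 : Module.finrank ℝ (ℝ ∙ u) = 1 := finrank_span_singleton hu
    rw [h] at h1
    have h2 : Module.finrank ℝ (⊤ : Submodule ℝ (EuclideanSpace ℝ (Fin 2))) = 2 := by
      rw [finrank_top, finrank_euclideanSpace]; simp
    omega
  obtain ⟨w₀, hw₀⟩ : ∃ w₀ : (EuclideanSpace ℝ (Fin 2)), w₀ ∉ (ℝ ∙ u) := by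
    by_contra h
    push_neg at h
    exact hspan_ne_top (eq_top_iff.mpr fun x _ => h x)
  obtain ⟨v, hv, hLv⟩ := exists_v L hLinj hu hw₀ hLu
  have hvne : v ≠ 0 := fun h0 => hv (h0 ▸ zero_mem _)
  refine ⟨A, B, B + v, ?_, ?_, Ne.symm hABdir, ?_⟩
  · rw [collinear_iff_of_mem (Set.mem_insert_of_mem _ (Set.mem_insert _ _))]
    rintro ⟨v₀, hv₀⟩
    obtain ⟨s, hs⟩ := hv₀ A (Set.mem_insert _ _)
    obtain ⟨t, ht⟩ := hv₀ (B + v) (by simp)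
    have hsu : u = s • v₀ := by
      rw [hudef, hs, vadd_eq_add]; abel
    have htv : v = t • v₀ := by
      have := ht
      rw [vadd_eq_add] at this
      have : v = (B + v) - B := by abel
      rw [this, ht, vadd_eq_add]; abel
    have hs0 : s ≠ 0 := fun h0 => hu (by rw [hsu, h0, zero_smul])
    apply hv
    rw [mem_span_singleton]
    exact ⟨t / s, by rw [hsu, smul_smul, div_mul_cancel₀ _ hs0, ← htv]⟩
  · rw [collinear_iff_of_mem (Set.mem_insert_of_mem _ (Set.mem_insert _ _))]
    rintro ⟨v₀, hv₀⟩
    obtain ⟨s, hs⟩ := hv₀ (α A) (Set.mem_insert _ _)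
    obtain ⟨t, ht⟩ := hv₀ (α (B + v)) (by simp)
    have hsu : L u = s • v₀ := by
      rw [hudef, ← hsub, hs, vadd_eq_add]; abel
    have htv : L v = t • v₀ := by
      have h1 : L v = α (B + v) - α B := by
        rw [hsub]; congr 1; abel
      rw [h1, ht, vadd_eq_add]; abel
    have hs0 : s ≠ 0 := by
      intro h0
      rw [h0, zero_smul] at hsu
      exact hu (hLinj (by rw [hsu, map_zero]))
    apply hv
    rw [mem_span_singleton]
    refine ⟨t / s, ?_⟩
    apply hLinj
    rw [map_smul, hsu, htv, smul_smul, div_mul_cancel₀ _ hs0]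
  · rw [hdir, hdirα, show (B : (EuclideanSpace ℝ (Fin 2))) - (B + v) = -v by abel, map_neg, span_neg', span_neg']
    exact Ne.symm hLv
end

section
/- Correctness of the fixed-point algorithm: let α be a similarity of ratio r ≠ 1 with fixed point C. Suppose P, Q, R are non-collinear with P' = α(P), Q' = α(Q), R' = α(R), line m = PQ not parallel to m' = P'Q', let n be the line through R parallel to m and n' the line through R' parallel to m', and suppose C does not lie on m or n. If D is the intersection point of m and m', and E is the intersection point of n and n', then C lies on line DE. -/
/-!
A map scaling all distances by `r` sends midpoints to midpoints, so it is affine; as it fixes `C`,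
`α X - C = L (X - C)` for its linear part `L`. Put `u = Q - P`, `v = L u`; these form a basis since
`m ∦ m'`. If `X` lies on `W + ℝ u` and on `α W + ℝ v`, comparing coordinates in `X - C = w + s u`
and `X - C = L w + s' v` (with `w = W - C`, `L u = v`) shows `X - C = w₁ (a u + v)`, where `w₁` is
the `v`-coordinate of `w` and `a` the `u`-coordinate of `L v`. Hence `D` (take `W = P`) and `E`
(take `W = R`) both lie on the line through `C` with direction `a u + v`.
-/

open Module Submodule

section DistEqMul

variable {E F PE PF : Type*} [NormedAddCommGroup E] [NormedAddCommGroup F] [NormedSpace ℝ E]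
  [NormedSpace ℝ F] [StrictConvexSpace ℝ E] [MetricSpace PE] [MetricSpace PF]
  [NormedAddTorsor E PE] [NormedAddTorsor F PF] {r : ℝ} {f : PF → PE}

theorem map_midpoint_of_dist_eq_mul (hf : ∀ x y, dist (f x) (f y) = r * dist x y) (x y : PF) :
    f (midpoint ℝ x y) = midpoint ℝ (f x) (f y) := by
  apply eq_midpoint_of_dist_eq_half <;>
    simp only [hf, dist_left_midpoint, dist_midpoint_right, Real.norm_ofNat] <;> ring

theorem exists_affineMap_coe_eq_of_dist_eq_mul (hr : 0 ≤ r)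
    (hf : ∀ x y, dist (f x) (f y) = r * dist x y) : ∃ g : PF →ᵃ[ℝ] PE, ⇑g = f :=
  have hlip : LipschitzWith r.toNNReal f :=
    .of_dist_le_mul fun x y => by rw [hf, Real.coe_toNNReal r hr]
  ⟨.ofMapMidpoint f (map_midpoint_of_dist_eq_mul hf) hlip.continuous, rfl⟩

end DistEqMul

section Field

variable {K V P : Type*} [Field K] [AddCommGroup V] [Module K V]

theorem linearIndependent_pair_of_span_singleton_ne {u v : V} (hu : u ≠ 0) (hv : v ≠ 0)
    (huv : (K ∙ u) ≠ K ∙ v) : LinearIndependent K ![u, v] := by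
  refine (LinearIndependent.pair_iff' hu).2 fun a hau => huv ?_
  have ha : a ≠ 0 := by rintro rfl; exact hv (by simpa using hau.symm)
  rw [← hau, span_singleton_smul_eq (isUnit_iff_ne_zero.2 ha)]

variable [AddTorsor V P]

theorem collinear_insert_insert_of_vsub_mem_span_singleton {p₀ p₁ p₂ : P} {v : V}
    (h₁ : p₁ -ᵥ p₀ ∈ K ∙ v) (h₂ : p₂ -ᵥ p₀ ∈ K ∙ v) : Collinear K {p₀, p₁, p₂} := by
  have hline : ∀ p : P, p -ᵥ p₀ ∈ K ∙ v → ∃ a : K, p = a • v +ᵥ p₀ := fun p hp =>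
    (mem_span_singleton.1 hp).imp fun a ha => (eq_vadd_iff_vsub_eq _ _ _).2 ha.symm
  rw [collinear_iff_of_mem (Set.mem_insert p₀ _)]
  refine ⟨v, ?_⟩
  simp only [Set.mem_insert_iff, Set.mem_singleton_iff, forall_eq_or_imp, forall_eq]
  exact ⟨⟨0, by simp⟩, hline p₁ h₁, hline p₂ h₂⟩

end Field

section CommRing

variable {K V P : Type*} [CommRing K] [AddCommGroup V] [Module K V]

theorem Module.Basis.mem_span_of_sub_mem_span_of_sub_map_mem_span (b : Basis (Fin 2) K V)
    {L : V →ₗ[K] V} (hL : L (b 0) = b 1) {w x : V} (h₀ : x - w ∈ K ∙ b 0)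
    (h₁ : x - L w ∈ K ∙ b 1) : x ∈ K ∙ (b.repr (L (b 1)) 0 • b 0 + b 1) := by
  obtain ⟨s, hs⟩ := mem_span_singleton.1 h₀
  obtain ⟨t, ht⟩ := mem_span_singleton.1 h₁
  have hw : w = b.repr w 0 • b 0 + b.repr w 1 • b 1 := by
    simpa only [Fin.sum_univ_two] using (b.sum_repr w).symm
  refine mem_span_singleton.2 ⟨b.repr w 1, b.ext_elem fun i => ?_⟩
  fin_cases i
  · rw [eq_add_of_sub_eq' ht.symm, hw]
    simp [hL, mul_comm]
  · rw [eq_add_of_sub_eq' hs.symm]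
    simp

variable [AddTorsor V P]

theorem AffineMap.vsub_mem_span_of_mem_of_map_mem (b : Basis (Fin 2) K V) {f : P →ᵃ[K] P}
    (hb : f.linear (b 0) = b 1) {C W X : P} (hC : f C = C) {s s' : AffineSubspace K P}
    (hs : s.direction = K ∙ b 0) (hs' : s'.direction = K ∙ b 1) (hW : W ∈ s) (hfW : f W ∈ s')
    (hX : X ∈ s) (hX' : X ∈ s') : X -ᵥ C ∈ K ∙ (b.repr (f.linear (b 1)) 0 • b 0 + b 1) := by
  refine b.mem_span_of_sub_mem_span_of_sub_map_mem_span hb (w := W -ᵥ C) ?_ ?_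
  · rw [vsub_sub_vsub_cancel_right, ← hs]
    exact AffineSubspace.vsub_mem_direction hX hW
  · rw [f.linearMap_vsub, hC, vsub_sub_vsub_cancel_right, ← hs']
    exact AffineSubspace.vsub_mem_direction hX' hfW

end CommRing

theorem fixed_point_algorithm_correct_general
    (α : EuclideanSpace ℝ (Fin 2) → EuclideanSpace ℝ (Fin 2)) (r : ℝ) (hr : 0 < r)
    (hα : ∀ P Q, dist (α P) (α Q) = r * dist P Q)
    (C : EuclideanSpace ℝ (Fin 2)) (hC : α C = C)
    (P Q R : EuclideanSpace ℝ (Fin 2))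
    (m m' n n' : AffineSubspace ℝ (EuclideanSpace ℝ (Fin 2)))
    (hm : m = affineSpan ℝ ({P, Q} : Set (EuclideanSpace ℝ (Fin 2))))
    (hm' : m' = affineSpan ℝ ({α P, α Q} : Set (EuclideanSpace ℝ (Fin 2))))
    (hmm' : m.direction ≠ m'.direction)
    (hRn : R ∈ n) (hnm : n.direction = m.direction)
    (hRn' : α R ∈ n') (hnm' : n'.direction = m'.direction)
    (D E : EuclideanSpace ℝ (Fin 2))
    (hD : D ∈ m ∧ D ∈ m') (hE : E ∈ n ∧ E ∈ n') :
    Collinear ℝ ({C, D, E} : Set (EuclideanSpace ℝ (Fin 2))) := by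
  obtain ⟨f, rfl⟩ := exists_affineMap_coe_eq_of_dist_eq_mul hr.le hα
  have hPQ : P ≠ Q := by
    rintro rfl
    simp [hm, hm', direction_affineSpan] at hmm'
  have hfPQ : f P ≠ f Q := by
    rw [← dist_pos, hα]
    exact mul_pos hr (dist_pos.2 hPQ)
  have hm_dir : m.direction = ℝ ∙ (Q -ᵥ P) := by
    rw [hm, direction_affineSpan, vectorSpan_pair_rev]
  have hm'_dir : m'.direction = ℝ ∙ f.linear (Q -ᵥ P) := by
    rw [hm', direction_affineSpan, vectorSpan_pair_rev, f.linearMap_vsub]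
  have hind : LinearIndependent ℝ ![Q -ᵥ P, f.linear (Q -ᵥ P)] :=
    linearIndependent_pair_of_span_singleton_ne (vsub_ne_zero.2 hPQ.symm)
      (by rw [f.linearMap_vsub]; exact vsub_ne_zero.2 hfPQ.symm) (hm_dir ▸ hm'_dir ▸ hmm')
  let b := basisOfLinearIndependentOfCardEqFinrank hind (by simp)
  have hb₀ : b 0 = Q -ᵥ P := by simp [b]
  have hb₁ : b 1 = f.linear (Q -ᵥ P) := by simp [b]
  have hb : f.linear (b 0) = b 1 := by rw [hb₀, hb₁]
  rw [← hb₀] at hm_dir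
  rw [← hb₁] at hm'_dir
  exact collinear_insert_insert_of_vsub_mem_span_singleton
    (f.vsub_mem_span_of_mem_of_map_mem b hb hC hm_dir hm'_dir
      (hm ▸ left_mem_affineSpan_pair ℝ P Q) (hm' ▸ left_mem_affineSpan_pair ℝ _ _) hD.1 hD.2)
    (f.vsub_mem_span_of_mem_of_map_mem b hb hC (hnm.trans hm_dir) (hnm'.trans hm'_dir)
      hRn hRn' hE.1 hE.2)

theorem fixed_point_algorithm_correct
    (α : EuclideanSpace ℝ (Fin 2) → EuclideanSpace ℝ (Fin 2)) (r : ℝ) (hr : 0 < r) (hr1 : r ≠ 1)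
    (hα : ∀ P Q, dist (α P) (α Q) = r * dist P Q)
    (C : EuclideanSpace ℝ (Fin 2)) (hC : α C = C)
    (P Q R : EuclideanSpace ℝ (Fin 2))
    (hPQR : ¬ Collinear ℝ ({P, Q, R} : Set (EuclideanSpace ℝ (Fin 2))))
    (m m' n n' : AffineSubspace ℝ (EuclideanSpace ℝ (Fin 2)))
    (hm : m = affineSpan ℝ ({P, Q} : Set (EuclideanSpace ℝ (Fin 2))))
    (hm' : m' = affineSpan ℝ ({α P, α Q} : Set (EuclideanSpace ℝ (Fin 2))))
    (hmm' : m.direction ≠ m'.direction)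
    (hn : Module.finrank ℝ n.direction = 1) (hRn : R ∈ n) (hnm : n.direction = m.direction)
    (hn' : Module.finrank ℝ n'.direction = 1) (hRn' : α R ∈ n') (hnm' : n'.direction = m'.direction)
    (hCm : C ∉ m) (hCn : C ∉ n)
    (D E : EuclideanSpace ℝ (Fin 2))
    (hD : D ∈ m ∧ D ∈ m') (hE : E ∈ n ∧ E ∈ n') :
    Collinear ℝ ({C, D, E} : Set (EuclideanSpace ℝ (Fin 2))) :=
  fixed_point_algorithm_correct_general α r hr hα C hC P Q R m m' n n' hm hm' hmm' hRn hnm hRn' hnm'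
    D E hD hE
end

section
/- Betweenness transfer in the fixed point existence proof: if A, A', B, B' are points with lines AA' and BB' distinct and parallel, A, B, P collinear with P strictly between A and B, and A', B', P collinear, then P is strictly between A' and B'. -/
theorem betweenness_transfer
    (A A' B B' P : EuclideanSpace ℝ (Fin 2))
    (hA : A ≠ A') (hB : B ≠ B')
    (hne : affineSpan ℝ ({A, A'} : Set (EuclideanSpace ℝ (Fin 2)))
         ≠ affineSpan ℝ ({B, B'} : Set (EuclideanSpace ℝ (Fin 2))))
    (hpar : (affineSpan ℝ ({A, A'} : Set (EuclideanSpace ℝ (Fin 2)))).direction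
          = (affineSpan ℝ ({B, B'} : Set (EuclideanSpace ℝ (Fin 2)))).direction)
    (hP : Sbtw ℝ A P B)
    (hcol : Collinear ℝ ({A', B', P} : Set (EuclideanSpace ℝ (Fin 2)))) :
    Sbtw ℝ A' P B' := by
  have hd : A' -ᵥ A ≠ (0 : EuclideanSpace ℝ (Fin 2)) := by
    intro h
    exact hA (by rwa [vsub_eq_zero_iff_eq, eq_comm] at h)
  -- B is not on the line AA'
  have hBmem : B ∉ affineSpan ℝ ({A, A'} : Set (EuclideanSpace ℝ (Fin 2))) := by
    intro hBm
    exact hne (AffineSubspace.ext_of_direction_eq hpar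
      ⟨B, hBm, left_mem_affineSpan_pair ℝ B B'⟩)
  -- B - A is not a multiple of A' - A
  have hindep : ∀ c : ℝ, B -ᵥ A ≠ c • (A' -ᵥ A) := by
    intro c hc
    apply hBmem
    have hmem : B -ᵥ A ∈ (affineSpan ℝ ({A, A'} : Set (EuclideanSpace ℝ (Fin 2)))).direction := by
      rw [direction_affineSpan, vectorSpan_pair_rev, hc]
      exact Submodule.smul_mem _ _ (Submodule.mem_span_singleton_self _)
    exact (AffineSubspace.vsub_right_mem_direction_iff_mem
      (left_mem_affineSpan_pair ℝ A A') B).mp hmem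
  -- B' - B = v • (A' - A)
  have hv0 : B' -ᵥ B ∈ (affineSpan ℝ ({A, A'} : Set (EuclideanSpace ℝ (Fin 2)))).direction := by
    rw [hpar, direction_affineSpan, vectorSpan_pair_rev]
    exact Submodule.mem_span_singleton_self _
  rw [direction_affineSpan, vectorSpan_pair_rev, Submodule.mem_span_singleton] at hv0
  obtain ⟨v, e3⟩ := hv0
  -- P = lineMap A B s with s in Ioo 0 1
  obtain ⟨s, hs, hPs⟩ := hP.mem_image_Ioo
  have e4 : P -ᵥ A = s • (B -ᵥ A) := by
    rw [← hPs, AffineMap.lineMap_apply, vadd_vsub]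
  -- collinearity data
  rw [collinear_iff_of_mem (Set.mem_insert A' _)] at hcol
  obtain ⟨w, hw⟩ := hcol
  obtain ⟨r₁, hr₁⟩ := hw B' (by simp)
  obtain ⟨r₂, hr₂⟩ := hw P (by simp)
  have e1 : B' -ᵥ A' = r₁ • w := by rw [hr₁, vadd_vsub]
  have e2 : P -ᵥ A' = r₂ • w := by rw [hr₂, vadd_vsub]
  have key : (s * r₁ - r₂) • w = (s * (v - 1) + 1) • (A' -ᵥ A) := by
    simp only [vsub_eq_sub] at e1 e2 e3 e4 ⊢
    linear_combination (norm := module) (-s) • e1 + e2 + (-s) • e3 - e4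
  have e5 : B -ᵥ A = r₁ • w - v • (A' -ᵥ A) + (A' -ᵥ A) := by
    simp only [vsub_eq_sub] at e1 e3 ⊢
    linear_combination (norm := module) e1 + e3
  have hsv : s * (v - 1) + 1 = 0 := by
    rcases eq_or_ne (s * r₁ - r₂) 0 with h0 | h0
    · rw [h0, zero_smul] at key
      rcases smul_eq_zero.mp key.symm with h | h
      · exact h
      · exact absurd h hd
    · exfalso
      have hw0 : w = ((s * (v - 1) + 1) / (s * r₁ - r₂)) • (A' -ᵥ A) := by
        have h2 : w = (s * r₁ - r₂)⁻¹ • ((s * (v - 1) + 1) • (A' -ᵥ A)) := by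
          rw [← key, smul_smul, inv_mul_cancel₀ h0, one_smul]
        rw [h2, smul_smul, div_eq_inv_mul]
      exact hindep (r₁ * ((s * (v - 1) + 1) / (s * r₁ - r₂)) - v + 1)
        (by rw [e5, hw0]; module)
  have hAB' : A' ≠ B' := by
    intro h
    apply hindep (1 - v)
    have e7 : B -ᵥ A = (B' -ᵥ A') - v • (A' -ᵥ A) + (A' -ᵥ A) := by
      simp only [vsub_eq_sub] at e3 ⊢
      linear_combination (norm := module) e3
    rw [e7, ← h, vsub_self]
    module
  have e8 : P -ᵥ A' = s • (B' -ᵥ A') := by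
    have t1 : P -ᵥ A' = s • (B -ᵥ A) - (A' -ᵥ A) := by
      simp only [vsub_eq_sub] at e4 ⊢
      linear_combination (norm := module) e4
    have t2 : s • (B' -ᵥ A') = s • (B -ᵥ A) + (s * (v - 1)) • (A' -ᵥ A) := by
      simp only [vsub_eq_sub] at e3 ⊢
      linear_combination (norm := module) (-s) • e3
    have t3 : s * (v - 1) = -1 := by linarith
    rw [t1, t2, t3]
    module
  have hP' : P = AffineMap.lineMap A' B' s := by
    rw [AffineMap.lineMap_apply, eq_vadd_iff_vsub_eq]
    exact e8
  rw [hP']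
  exact sbtw_lineMap_iff.mpr ⟨hAB', hs⟩
end
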